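/- arXiv:1505.00823 — 4 statements merged into one kernel-verified Lean document; each statement's English description precedes it below -/
import Mathlib

section
/- Let (m,n) be a coprime pair of positive integers and let R be a set of m+n integers with 0 ∈ R. Then R is the rank set of some (m,n)-path if and only if for every ℓ ∈ R, at least one of ℓ+m and ℓ−n belongs to R. -/
/-- The list of ranks of the lattice points visited by a path (excluding the final
point), starting from rank `r`.  A `true` entry is a north (`u`) step, which adds `m`
to the rank; a `false` entry is an east (`d`) step, which subtracts `n`. -/
def rankWalk (m n : ℤ) : List Bool → ℤ → List ℤ
  | [], _ => []
  | b :: bs, r => r :: rankWalk m n bs (r + if b then m else -n)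

/-- An `(m,n)`-path: a word of `n` north steps (`true`) and `m` east steps (`false`). -/
def IsPathWord (m n : ℕ) (P : List Bool) : Prop :=
  P.length = m + n ∧ P.count true = n

/-- An `(m,n)`-Dyck path: an `(m,n)`-path all of whose ranks are nonnegative. -/
def IsDyckWord (m n : ℕ) (P : List Bool) : Prop :=
  IsPathWord m n P ∧ ∀ r ∈ rankWalk (m : ℤ) (n : ℤ) P 0, 0 ≤ r

/-- The rank set of a path: the ranks of its `m+n` lattice points other than the endpoint. -/
def rankSet (m n : ℕ) (P : List Bool) : Finset ℤ :=
  (rankWalk (m : ℤ) (n : ℤ) P 0).toFinset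

/-- `R` is the rank set of some `(m,n)`-path. -/
def IsRankSet (m n : ℕ) (R : Finset ℤ) : Prop :=
  ∃ P : List Bool, IsPathWord m n P ∧ rankSet m n P = R

/-- `R` is the rank set of some `(m,n)`-Dyck path. -/
def IsDyckRankSet (m n : ℕ) (R : Finset ℤ) : Prop :=
  ∃ P : List Bool, IsDyckWord m n P ∧ rankSet m n P = R

/-! Each step changes the rank by `+m` or `-n`, i.e. by `m` modulo `m + n`. Given a closed set
`R`, walk from `0`, stepping by `+m` whenever `ℓ + m ∈ R` and by `-n` otherwise, so the walk
stays in `R`. After `i` steps the rank is `i * m` modulo `m + n`; as `m` is a unit modulo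
`m + n`, the first `m + n` ranks are pairwise distinct and exhaust `R`, and the `(m + n)`-th is
again `0`. A closed walk of `m + n` steps uses exactly `n` north steps, so it is an
`(m,n)`-path with rank set `R`. -/

def walkEnd (m n : ℤ) : List Bool → ℤ → ℤ
  | [], r => r
  | b :: bs, r => walkEnd m n bs (r + if b then m else -n)

section Walk

variable (m n : ℤ)

theorem walkEnd_eq (P : List Bool) (r : ℤ) :
    walkEnd m n P r = r + m * P.count true - n * P.count false := by
  induction P generalizing r with
  | nil => simp [walkEnd]
  | cons b bs ih => cases b <;> simp [walkEnd, ih] <;> ring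

theorem mem_rankWalk_or_eq_walkEnd (P : List Bool) (r : ℤ) :
    r ∈ rankWalk m n P r ∨ r = walkEnd m n P r := by
  cases P <;> simp [rankWalk, walkEnd]

theorem add_or_sub_mem_of_mem_rankWalk {P : List Bool} {r ℓ : ℤ} (h : ℓ ∈ rankWalk m n P r) :
    ℓ + m ∈ walkEnd m n P r :: rankWalk m n P r ∨
      ℓ - n ∈ walkEnd m n P r :: rankWalk m n P r := by
  induction P generalizing r with
  | nil => simp [rankWalk] at h
  | cons b bs ih =>
    simp only [rankWalk, walkEnd, List.mem_cons] at h ⊢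
    rcases h with rfl | h
    · have := mem_rankWalk_or_eq_walkEnd m n bs (ℓ + if b then m else -n)
      cases b <;> simp only [Bool.false_eq_true, if_true, if_false, ← sub_eq_add_neg] at this ⊢ <;>
        tauto
    · simp only [List.mem_cons] at ih
      rcases ih h with h' | h' <;> tauto

end Walk

theorem walkEnd_eq_self_iff {m n : ℕ} {P : List Bool} (hP : P.length = m + n) (r : ℤ) :
    walkEnd m n P r = r ↔ IsPathWord m n P := by
  have hcount := List.count_true_add_count_false P
  rw [walkEnd_eq, IsPathWord, and_iff_right hP]
  constructor
  · intro h
    have hfactor : ((m : ℤ) + n) * (P.count true - n) = 0 := by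
      have hfalse : (P.count false : ℤ) = m + n - P.count true := by omega
      rw [hfalse] at h
      linear_combination h
    rcases mul_eq_zero.mp hfactor with h | h <;> omega
  · intro h
    have hfalse : P.count false = m := by omega
    rw [h, hfalse]
    ring

section Orbit

variable {N m : ℕ} {f : ℤ → ℤ}

theorem intCast_iterate (hf : ∀ x, (f x : ZMod N) = x + m) (k : ℕ) (r : ℤ) :
    ((f^[k] r : ℤ) : ZMod N) = r + k * m := by
  induction k with
  | zero => simp
  | succ k ih => rw [Function.iterate_succ_apply', hf, ih]; push_cast; ring

theorem eq_of_natCast_mul_eq (hcop : m.Coprime N) {i j : ℕ} (hi : i < N) (hj : j < N)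
    (h : (i * m : ZMod N) = j * m) : i = j := by
  have := ((ZMod.isUnit_iff_coprime m N).mpr hcop).mul_left_inj.mp h
  rwa [ZMod.natCast_eq_natCast_iff', Nat.mod_eq_of_lt hi, Nat.mod_eq_of_lt hj] at this

theorem injOn_iterate (hcop : m.Coprime N) (hf : ∀ x, (f x : ZMod N) = x + m) (r : ℤ) :
    Set.InjOn (fun k => f^[k] r) (Set.Iio N) := by
  intro i hi j hj h
  apply eq_of_natCast_mul_eq hcop hi hj
  simpa [intCast_iterate hf] using congrArg (fun x : ℤ => (x : ZMod N)) h

variable {s : Finset ℤ} {r : ℤ}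

theorem image_iterate_eq (hcop : m.Coprime N) (hf : ∀ x, (f x : ZMod N) = x + m)
    (hs : Set.MapsTo f s s) (hr : r ∈ s) (hcard : s.card = N) :
    (Finset.range N).image (fun k => f^[k] r) = s := by
  refine Finset.eq_of_subset_of_card_le ?_ ?_
  · simpa [Finset.image_subset_iff] using fun k _ => hs.iterate k hr
  · rw [Finset.card_image_of_injOn (by simpa using injOn_iterate hcop hf r), Finset.card_range,
      hcard]

theorem iterate_card_eq_self (hcop : m.Coprime N) (hf : ∀ x, (f x : ZMod N) = x + m)
    (hs : Set.MapsTo f s s) (hr : r ∈ s) (hcard : s.card = N) : f^[N] r = r := by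
  have hmem : f^[N] r ∈ (Finset.range N).image (fun k => f^[k] r) := by
    rw [image_iterate_eq hcop hf hs hr hcard]
    exact hs.iterate N hr
  obtain ⟨j, hj, hje⟩ := Finset.mem_image.mp hmem
  rw [Finset.mem_range] at hj
  have hj0 : j = 0 := by
    apply eq_of_natCast_mul_eq hcop hj (by omega)
    simpa [intCast_iterate hf] using congrArg (fun x : ℤ => (x : ZMod N)) hje
  simpa [hj0] using hje.symm

end Orbit

section Greedy

def stepBy (m n : ℤ) (c : ℤ → Bool) (x : ℤ) : ℤ := x + if c x then m else -n

def orbitWord (m n : ℤ) (c : ℤ → Bool) (k : ℕ) (r : ℤ) : List Bool :=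
  (List.range k).map fun i => c ((stepBy m n c)^[i] r)

variable (m n : ℤ) (c : ℤ → Bool)

theorem rankWalk_orbitWord (k : ℕ) (r : ℤ) :
    rankWalk m n (orbitWord m n c k r) r = (List.range k).map fun i => (stepBy m n c)^[i] r := by
  induction k generalizing r with
  | zero => simp [orbitWord, rankWalk]
  | succ k ih =>
    simp only [orbitWord, List.range_succ_eq_map, List.map_cons, List.map_map, Function.comp_def,
      Function.iterate_succ_apply, Function.iterate_zero_apply] at ih ⊢
    exact congrArg (r :: ·) (ih (stepBy m n c r))

theorem walkEnd_orbitWord (k : ℕ) (r : ℤ) :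
    walkEnd m n (orbitWord m n c k r) r = (stepBy m n c)^[k] r := by
  induction k generalizing r with
  | zero => simp [orbitWord, walkEnd]
  | succ k ih =>
    simp only [orbitWord, List.range_succ_eq_map, List.map_cons, List.map_map, Function.comp_def,
      Function.iterate_succ_apply, Function.iterate_zero_apply] at ih ⊢
    exact ih (stepBy m n c r)

end Greedy

theorem intCast_stepBy (m n : ℕ) (c : ℤ → Bool) (x : ℤ) :
    ((stepBy m n c x : ℤ) : ZMod (m + n)) = x + m := by
  have hn : (n : ZMod (m + n)) = -m := by
    rw [eq_neg_iff_add_eq_zero, ← Nat.cast_add, add_comm, ZMod.natCast_self]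
  unfold stepBy
  split
  · push_cast; rfl
  · push_cast; rw [hn, neg_neg]

theorem IsRankSet.add_or_sub_mem {m n : ℕ} {R : Finset ℤ} (hR : IsRankSet m n R) (h0 : 0 ∈ R) :
    ∀ ℓ ∈ R, ℓ + (m : ℤ) ∈ R ∨ ℓ - (n : ℤ) ∈ R := by
  obtain ⟨P, hP, rfl⟩ := hR
  intro ℓ hℓ
  have hend : walkEnd m n P 0 = 0 := (walkEnd_eq_self_iff hP.1 0).mpr hP
  have hsub : ∀ x ∈ walkEnd m n P 0 :: rankWalk m n P 0, x ∈ rankSet m n P := by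
    simpa [rankSet, hend] using h0
  exact (add_or_sub_mem_of_mem_rankWalk m n (List.mem_toFinset.mp hℓ)).imp (hsub _) (hsub _)

theorem isRankSet_of_add_or_sub_mem {m n : ℕ} (hcop : m.Coprime n) {R : Finset ℤ}
    (hcard : R.card = m + n) (h0 : 0 ∈ R) (hR : ∀ ℓ ∈ R, ℓ + (m : ℤ) ∈ R ∨ ℓ - (n : ℤ) ∈ R) :
    IsRankSet m n R := by
  set c : ℤ → Bool := fun x => x + m ∈ R
  have hmaps : Set.MapsTo (stepBy m n c) R R := by
    intro x hx
    by_cases hxm : x + m ∈ R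
    · simp [stepBy, c, hxm]
    · simpa [stepBy, c, hxm, sub_eq_add_neg] using (hR x hx).resolve_left hxm
  have hcop' : m.Coprime (m + n) := Nat.coprime_self_add_right.mpr hcop
  have hf := intCast_stepBy m n c
  refine ⟨orbitWord m n c (m + n) 0, (walkEnd_eq_self_iff (by simp [orbitWord]) 0).mp ?_, ?_⟩
  · rw [walkEnd_orbitWord, iterate_card_eq_self hcop' hf hmaps h0 hcard]
  · rw [rankSet, rankWalk_orbitWord, ← image_iterate_eq hcop' hf hmaps h0 hcard]
    ext
    simp [eq_comm]

theorem rank_set_iff_closed_atLeastOne_general (m n : ℕ)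
    (hcop : Nat.Coprime m n) (R : Finset ℤ) (hcard : R.card = m + n)
    (h0 : (0 : ℤ) ∈ R) :
    IsRankSet m n R ↔ ∀ ℓ ∈ R, ℓ + (m : ℤ) ∈ R ∨ ℓ - (n : ℤ) ∈ R :=
  ⟨fun hR => hR.add_or_sub_mem h0, isRankSet_of_add_or_sub_mem hcop hcard h0⟩

/-- For a coprime pair `(m,n)` of positive integers and a set `R` of
`m + n` integers with `0 ∈ R`, `R` is the rank set of some `(m,n)`-path if and only if
for every `ℓ ∈ R`, at least one of `ℓ + m` and `ℓ - n` belongs to `R`. -/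
theorem rank_set_iff_closed_atLeastOne (m n : ℕ) (hm : 0 < m) (hn : 0 < n)
    (hcop : Nat.Coprime m n) (R : Finset ℤ) (hcard : R.card = m + n)
    (h0 : (0 : ℤ) ∈ R) :
    IsRankSet m n R ↔ ∀ ℓ ∈ R, ℓ + (m : ℤ) ∈ R ∨ ℓ - (n : ℤ) ∈ R :=
  rank_set_iff_closed_atLeastOne_general m n hcop R hcard h0
end

section
/- Let (m,n) be a coprime pair of positive integers and let R be a set of m+n integers with 0 ∈ R. Then R is the rank set of some (m,n)-path if and only if for every ℓ ∈ R, exactly one of ℓ+m and ℓ−n belongs to R. -/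
/-!
Along a path of length `m + n` the `i`-th rank is `≡ i * m` modulo `m + n`, since a north step
adds `m` and an east step subtracts `n ≡ m`. As `m` is coprime to `m + n`, the ranks of such a
path are pairwise incongruent modulo `m + n`. Hence the congruent numbers `ℓ + m` and `ℓ - n`
are never both ranks, while the successor of `ℓ` along the path (the endpoint, of rank `0`,
for the last point) is one of them.

Conversely, walking from `0` by the rule "step north iff `ℓ + m ∈ R`" never leaves `R`. The
`m + n` ranks visited are incongruent, so they exhaust `R`; the endpoint lies in `R` and is
`≡ 0`, so it is `0`, which forces exactly `n` north steps.
-/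

def endRank (m n : ℤ) : List Bool → ℤ → ℤ
  | [], r => r
  | b :: bs, r => endRank m n bs (r + if b then m else -n)

def greedyWord (m n : ℤ) (R : Finset ℤ) : ℕ → ℤ → List Bool
  | 0, _ => []
  | k + 1, r => decide (r + m ∈ R) :: greedyWord m n R k (r + if r + m ∈ R then m else -n)

section Walk

variable (m n : ℤ)

theorem endRank_eq (P : List Bool) (r : ℤ) :
    endRank m n P r = r + (m + n) * P.count true - n * P.length := by
  induction P generalizing r with
  | nil => simp [endRank]
  | cons b bs ih => cases b <;> simp [endRank, ih] <;> ring

theorem length_rankWalk (P : List Bool) (r : ℤ) : (rankWalk m n P r).length = P.length := by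
  induction P generalizing r with
  | nil => rfl
  | cons b bs ih => simp [rankWalk, ih]

theorem mem_rankWalk_self {P : List Bool} (hP : P ≠ []) (r : ℤ) : r ∈ rankWalk m n P r := by
  cases P with
  | nil => contradiction
  | cons b bs => simp [rankWalk]

theorem getElem_rankWalk_modEq (P : List Bool) (r : ℤ) (i : ℕ)
    (hi : i < (rankWalk m n P r).length) :
    (rankWalk m n P r)[i] ≡ r + i * m [ZMOD m + n] := by
  induction P generalizing r i with
  | nil => simp [rankWalk] at hi
  | cons b bs ih =>
    cases i with
    | zero => simp [rankWalk]
    | succ i =>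
      have hstep : (if b then m else -n) ≡ m [ZMOD m + n] := by
        cases b
        · exact Int.modEq_iff_dvd.mpr ⟨1, by simp⟩
        · rfl
      have hi' : i < (rankWalk m n bs (r + if b then m else -n)).length := by
        simpa [rankWalk] using hi
      calc (rankWalk m n (b :: bs) r)[i + 1]
          = (rankWalk m n bs (r + if b then m else -n))[i]'hi' := rfl
        _ ≡ r + (if b then m else -n) + i * m [ZMOD m + n] := ih _ _ _
        _ ≡ r + m + i * m [ZMOD m + n] := (hstep.add_left r).add_right _
        _ = r + ↑(i + 1) * m := by push_cast; ring

theorem mem_endRank_cons_rankWalk_self (P : List Bool) (r : ℤ) :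
    r ∈ endRank m n P r :: rankWalk m n P r := by
  cases P <;> simp [endRank, rankWalk]

theorem add_mem_or_sub_mem_endRank_cons_rankWalk {P : List Bool} {r ℓ : ℤ}
    (hℓ : ℓ ∈ rankWalk m n P r) :
    ℓ + m ∈ endRank m n P r :: rankWalk m n P r ∨
      ℓ - n ∈ endRank m n P r :: rankWalk m n P r := by
  induction P generalizing r with
  | nil => simp [rankWalk] at hℓ
  | cons b bs ih =>
    set r' := r + if b then m else -n
    have hsub : ∀ x ∈ endRank m n bs r' :: rankWalk m n bs r',
        x ∈ endRank m n (b :: bs) r :: rankWalk m n (b :: bs) r := by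
      simp only [endRank, rankWalk, List.mem_cons]
      tauto
    rcases List.mem_cons.mp hℓ with rfl | hℓ
    · have hr' := hsub _ (mem_endRank_cons_rankWalk_self m n bs r')
      cases b
      · exact Or.inr (by simpa [r', sub_eq_add_neg] using hr')
      · exact Or.inl (by simpa [r'] using hr')
    · exact (ih hℓ).imp (hsub _) (hsub _)

theorem forall_mem_greedyWord_mem {R : Finset ℤ} (hR : ∀ ℓ ∈ R, ℓ + m ∈ R ∨ ℓ - n ∈ R)
    (k : ℕ) {r : ℤ} (hr : r ∈ R) :
    ∀ x ∈ endRank m n (greedyWord m n R k r) r :: rankWalk m n (greedyWord m n R k r) r,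
      x ∈ R := by
  induction k generalizing r with
  | zero => simpa [greedyWord, endRank, rankWalk] using hr
  | succ k ih =>
    set r' := r + if r + m ∈ R then m else -n
    have hr' : r' ∈ R := by
      by_cases h : r + m ∈ R
      · simp [r', h]
      · simpa [r', h, sub_eq_add_neg] using (hR r hr).resolve_left h
    intro x hx
    simp only [greedyWord, endRank, rankWalk, decide_eq_true_eq, List.mem_cons] at hx
    rcases hx with rfl | rfl | hx
    · exact ih hr' _ (List.mem_cons_self ..)
    · exact hr
    · exact ih hr' _ (List.mem_cons_of_mem _ hx)

theorem length_greedyWord (R : Finset ℤ) (k : ℕ) (r : ℤ) :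
    (greedyWord m n R k r).length = k := by
  induction k generalizing r with
  | zero => rfl
  | succ k ih => simp [greedyWord, ih]

end Walk

section Coprime

variable {m n : ℕ}

theorem count_true_eq_iff_endRank_eq_zero (hmn : 0 < m + n) {P : List Bool}
    (hP : P.length = m + n) : P.count true = n ↔ endRank m n P 0 = 0 := by
  have hend : endRank m n P 0 = (m + n) * ((P.count true : ℤ) - n) := by
    rw [endRank_eq, hP]; push_cast; ring
  rw [hend, mul_eq_zero, sub_eq_zero]
  omega

theorem index_eq_of_getElem_rankWalk_modEq (hcop : m.Coprime n) {P : List Bool}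
    (hP : P.length ≤ m + n) {r : ℤ} {i j : ℕ} (hi : i < (rankWalk m n P r).length)
    (hj : j < (rankWalk m n P r).length)
    (h : (rankWalk m n P r)[i] ≡ (rankWalk m n P r)[j] [ZMOD m + n]) : i = j := by
  rw [length_rankWalk] at hi hj
  have hij : r + i * m ≡ r + j * m [ZMOD m + n] :=
    (getElem_rankWalk_modEq _ _ _ _ _ _).symm.trans (h.trans (getElem_rankWalk_modEq ..))
  have hij' : i * m ≡ j * m [MOD m + n] :=
    Int.natCast_modEq_iff.mp (by push_cast; exact Int.ModEq.add_left_cancel' r hij)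
  have hcop' : (m + n).gcd m = 1 := Nat.coprime_comm.mp (Nat.coprime_self_add_right.mpr hcop)
  exact (Nat.ModEq.cancel_right_of_coprime hcop' hij').eq_of_lt_of_lt (by omega) (by omega)

theorem nodup_rankWalk (hcop : m.Coprime n) {P : List Bool} (hP : P.length ≤ m + n) (r : ℤ) :
    (rankWalk m n P r).Nodup :=
  List.nodup_iff_injective_getElem.mpr fun i j h =>
    Fin.ext (index_eq_of_getElem_rankWalk_modEq hcop hP i.2 j.2 (by simp only at h; rw [h]))

theorem eq_of_mem_rankWalk_of_modEq (hcop : m.Coprime n) {P : List Bool} (hP : P.length ≤ m + n)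
    {r a b : ℤ} (ha : a ∈ rankWalk m n P r) (hb : b ∈ rankWalk m n P r)
    (h : a ≡ b [ZMOD m + n]) : a = b := by
  obtain ⟨i, hi, rfl⟩ := List.mem_iff_getElem.mp ha
  obtain ⟨j, hj, rfl⟩ := List.mem_iff_getElem.mp hb
  obtain rfl := index_eq_of_getElem_rankWalk_modEq hcop hP hi hj h
  rfl

theorem xor_add_mem_sub_mem_rankSet (hcop : m.Coprime n) {P : List Bool}
    (hP : IsPathWord m n P) {ℓ : ℤ} (hℓ : ℓ ∈ rankSet m n P) :
    Xor (ℓ + m ∈ rankSet m n P) (ℓ - n ∈ rankSet m n P) := by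
  obtain ⟨hlen, hcount⟩ := hP
  have hmn : 0 < m + n := Nat.pos_of_ne_zero fun h => by simp_all
  have hend : endRank m n P 0 = 0 := (count_true_eq_iff_endRank_eq_zero hmn hlen).mp hcount
  have hne : P ≠ [] := by rintro rfl; simp at hlen; omega
  have h0 : (0 : ℤ) ∈ rankWalk m n P 0 := mem_rankWalk_self _ _ hne 0
  have hsub : ∀ x ∈ endRank m n P 0 :: rankWalk m n P 0, x ∈ rankSet m n P := by
    simpa [rankSet, hend] using h0
  rw [xor_iff_or_and_not_and]
  refine ⟨(add_mem_or_sub_mem_endRank_cons_rankWalk _ _ (List.mem_toFinset.mp hℓ)).imp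
    (hsub _) (hsub _), fun ⟨hplus, hminus⟩ => ?_⟩
  have := eq_of_mem_rankWalk_of_modEq hcop hlen.le (List.mem_toFinset.mp hplus)
    (List.mem_toFinset.mp hminus) (Int.modEq_iff_dvd.mpr ⟨-1, by ring⟩)
  omega

theorem isRankSet_of_add_mem_or_sub_mem (hcop : m.Coprime n) {R : Finset ℤ}
    (hcard : R.card = m + n) (h0 : (0 : ℤ) ∈ R) (hR : ∀ ℓ ∈ R, ℓ + m ∈ R ∨ ℓ - n ∈ R) :
    IsRankSet m n R := by
  have hmn : 0 < m + n := Nat.pos_of_ne_zero fun h => by simp_all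
  set P := greedyWord m n R (m + n) 0
  have hlen : P.length = m + n := length_greedyWord ..
  have hmem := forall_mem_greedyWord_mem m n hR (m + n) h0
  have hset : rankSet m n P = R := by
    refine Finset.eq_of_subset_of_card_le (fun x hx => hmem x ?_) ?_
    · exact List.mem_cons_of_mem _ (List.mem_toFinset.mp hx)
    · rw [hcard, rankSet, List.toFinset_card_of_nodup (nodup_rankWalk hcop hlen.le 0),
        length_rankWalk, hlen]
  have hend : endRank m n P 0 = 0 := by
    have hmemR : ∀ x, x ∈ rankWalk m n P 0 ↔ x ∈ R := by simp [← hset, rankSet]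
    refine eq_of_mem_rankWalk_of_modEq hcop hlen.le
      ((hmemR _).mpr (hmem _ (List.mem_cons_self ..))) ((hmemR 0).mpr h0) (Int.modEq_iff_dvd.mpr ?_)
    exact ⟨n - P.count true, by rw [endRank_eq, hlen]; push_cast; ring⟩
  exact ⟨P, ⟨hlen, (count_true_eq_iff_endRank_eq_zero hmn hlen).mpr hend⟩, hset⟩

end Coprime

theorem rank_set_iff_closed_exactlyOne_general (m n : ℕ)
    (hcop : Nat.Coprime m n) (R : Finset ℤ) (hcard : R.card = m + n)
    (h0 : (0 : ℤ) ∈ R) :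
    IsRankSet m n R ↔ ∀ ℓ ∈ R, Xor' (ℓ + (m : ℤ) ∈ R) (ℓ - (n : ℤ) ∈ R) := by
  constructor
  · rintro ⟨P, hP, rfl⟩ ℓ hℓ
    exact xor_add_mem_sub_mem_rankSet hcop hP hℓ
  · intro hxor
    exact isRankSet_of_add_mem_or_sub_mem hcop hcard h0 fun ℓ hℓ => Xor.or (hxor ℓ hℓ)

/-- For a coprime pair `(m,n)` of positive integers and a set `R` of
`m + n` integers with `0 ∈ R`, `R` is the rank set of some `(m,n)`-path if and only if
for every `ℓ ∈ R`, exactly one of `ℓ + m` and `ℓ - n` belongs to `R`. -/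
theorem rank_set_iff_closed_exactlyOne (m n : ℕ) (hm : 0 < m) (hn : 0 < n)
    (hcop : Nat.Coprime m n) (R : Finset ℤ) (hcard : R.card = m + n)
    (h0 : (0 : ℤ) ∈ R) :
    IsRankSet m n R ↔ ∀ ℓ ∈ R, Xor' (ℓ + (m : ℤ) ∈ R) (ℓ - (n : ℤ) ∈ R) :=
  rank_set_iff_closed_exactlyOne_general m n hcop R hcard h0
end

section
/- Let (m,n) be a coprime pair of positive integers and let R be a set of m+n integers with 0 ∈ R. Then R is the rank set of some (m,n)-path if and only if for every ℓ ∈ R, exactly one of ℓ−m and ℓ+n belongs to R (and this in turn is equivalent to: for every ℓ ∈ R, at least one of ℓ−m and ℓ+n belongs to R). -/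
/-! Reduction modulo `m + n` sends `ℓ - m` and `ℓ + n` to the same residue. If every `ℓ ∈ R`
has `ℓ - m` or `ℓ + n` in `R`, the residues of `R` contain `0` and are closed under adding `n`,
which generates `ZMod (m + n)`; so the `m + n` elements of `R` have distinct residues, and at most
one of `ℓ - m`, `ℓ + n` lies in `R`. The path is then read off from `R`: its `i`-th rank is the
element of `R` congruent to `i * m`, and consecutive ranks differ by `m` or `-n`. Conversely,
in a path every rank but the first has its predecessor among the ranks, and so does the first
one, `0`, because the path returns to rank `0`. -/

def rankStep (m n : ℤ) (b : Bool) : ℤ := if b then m else -n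

section Walk

variable (m n : ℤ)

theorem rankWalk_cons (b : Bool) (bs : List Bool) (r : ℤ) :
    rankWalk m n (b :: bs) r = r :: rankWalk m n bs (r + rankStep m n b) := rfl

theorem rankWalk_append (P Q : List Bool) (r : ℤ) :
    rankWalk m n (P ++ Q) r =
      rankWalk m n P r ++ rankWalk m n Q (r + (P.map (rankStep m n)).sum) := by
  induction P generalizing r with
  | nil => simp [rankWalk]
  | cons b bs ih => simp [rankWalk_cons, ih, add_assoc]

theorem sum_map_rankStep (P : List Bool) :
    (P.map (rankStep m n)).sum = P.count true * m - P.count false * n := by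
  induction P with
  | nil => simp
  | cons b bs ih => cases b <;> simp [rankStep, ih] <;> ring

variable {m n}

theorem mem_rankWalk_pred {P : List Bool} {r ℓ : ℤ} (h : ℓ ∈ rankWalk m n P r) :
    ℓ = r ∨ ℓ - m ∈ rankWalk m n P r ∨ ℓ + n ∈ rankWalk m n P r := by
  induction P generalizing r with
  | nil => simp [rankWalk] at h
  | cons b bs ih =>
    simp only [rankWalk_cons, List.mem_cons] at h ⊢
    rcases h with rfl | h
    · exact .inl rfl
    · rcases ih h with rfl | h' | h'
      · cases b <;> simp [rankStep]
      · exact .inr (.inl (.inr h'))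
      · exact .inr (.inr (.inr h'))

theorem rankWalk_end_pred {P : List Bool} (hP : P ≠ []) (r : ℤ) :
    r + (P.map (rankStep m n)).sum - m ∈ rankWalk m n P r ∨
      r + (P.map (rankStep m n)).sum + n ∈ rankWalk m n P r := by
  obtain ⟨P, b, rfl⟩ := (List.eq_nil_or_concat' P).resolve_left hP
  cases b <;> simp [rankWalk_append, rankWalk, rankStep, ← add_assoc]

theorem sum_map_rankStep_range {g : ℕ → ℤ} {b : ℕ → Bool}
    (hg : ∀ i, g (i + 1) = g i + rankStep m n (b i)) (k : ℕ) :
    g 0 + (((List.range k).map b).map (rankStep m n)).sum = g k := by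
  induction k with
  | zero => simp
  | succ k ih =>
    rw [List.map_map] at ih
    simp [List.range_succ, ← add_assoc, ih, hg]

theorem rankWalk_map_range {g : ℕ → ℤ} {b : ℕ → Bool}
    (hg : ∀ i, g (i + 1) = g i + rankStep m n (b i)) (k : ℕ) :
    rankWalk m n ((List.range k).map b) (g 0) = (List.range k).map g := by
  induction k with
  | zero => simp [rankWalk]
  | succ k ih =>
    rw [List.range_succ, List.map_append, rankWalk_append, ih, sum_map_rankStep_range hg]
    simp [rankWalk]

end Walk

theorem isPathWord_iff {m n : ℕ} {P : List Bool} :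
    IsPathWord m n P ↔ P.length = m + n ∧ (P.map (rankStep m n)).sum = 0 := by
  have hcount := P.count_true_add_count_false
  rw [IsPathWord, sum_map_rankStep]
  refine and_congr_right fun hlen => ⟨fun ht => ?_, fun hsum => ?_⟩
  · have hf : P.count false = m := by omega
    rw [ht, hf]; ring
  · rcases Nat.eq_zero_or_pos (m + n) with hN | hN
    · omega
    · have hf : (P.count false : ℤ) = m + n - P.count true := by omega
      have : (P.count true : ℤ) * (m + n) = n * (m + n) := by
        rw [hf] at hsum
        linear_combination hsum
      exact Nat.eq_of_mul_eq_mul_right hN (by exact_mod_cast this)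

theorem exists_lt_natCast_mul_eq_of_isUnit {N : ℕ} [NeZero N] {a : ZMod N} (ha : IsUnit a)
    (x : ZMod N) : ∃ k < N, (k : ZMod N) * a = x :=
  ⟨(x * ↑ha.unit⁻¹).val, ZMod.val_lt _, by simp [mul_assoc]⟩

theorem Nat.Coprime.neZero_add {m n : ℕ} (h : m.Coprime n) : NeZero (m + n) :=
  ⟨fun h' => by simp_all [Nat.add_eq_zero_iff]⟩

theorem intCast_sub_eq_intCast_add (m n : ℕ) (ℓ : ℤ) :
    ((ℓ - m : ℤ) : ZMod (m + n)) = ((ℓ + n : ℤ) : ZMod (m + n)) :=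
  (ZMod.intCast_eq_intCast_iff_dvd_sub _ _ _).2 ⟨1, by push_cast; ring⟩

theorem bijOn_intCast_of_pred_mem {m n : ℕ} (hcop : m.Coprime n) {R : Finset ℤ}
    (hcard : R.card = m + n) (h0 : (0 : ℤ) ∈ R) (hR : ∀ ℓ ∈ R, ℓ - m ∈ R ∨ ℓ + n ∈ R) :
    Set.BijOn (Int.cast : ℤ → ZMod (m + n)) R Set.univ := by
  have := hcop.neZero_add
  have hmul : ∀ k : ℕ, ∃ ℓ ∈ R, (ℓ : ZMod (m + n)) = k * n := by
    intro k
    induction k with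
    | zero => exact ⟨0, h0, by simp⟩
    | succ k ih =>
      obtain ⟨ℓ, hℓ, hcast⟩ := ih
      have hnext : ((ℓ + n : ℤ) : ZMod (m + n)) = (k + 1 : ℕ) * n := by
        push_cast [hcast]; ring
      rcases hR ℓ hℓ with h | h
      · exact ⟨_, h, by rw [intCast_sub_eq_intCast_add, hnext]⟩
      · exact ⟨_, h, hnext⟩
  have hn : IsUnit (n : ZMod (m + n)) :=
    (ZMod.isUnit_iff_coprime n _).2 (Nat.coprime_add_self_right.2 hcop.symm)
  have hsurj : Set.SurjOn (Int.cast : ℤ → ZMod (m + n)) R Set.univ := fun x _ => by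
    obtain ⟨k, -, rfl⟩ := exists_lt_natCast_mul_eq_of_isUnit hn x
    exact hmul k
  have himage : R.image (Int.cast : ℤ → ZMod (m + n)) = Finset.univ :=
    Finset.eq_univ_of_forall fun x => by simpa using hsurj (Set.mem_univ x)
  refine ⟨Set.mapsTo_univ _ _, Finset.injOn_of_card_image_eq ?_, hsurj⟩
  rw [himage, Finset.card_univ, ZMod.card, hcard]

theorem xor_of_pred_mem {m n : ℕ} (hcop : m.Coprime n) {R : Finset ℤ}
    (hcard : R.card = m + n) (h0 : (0 : ℤ) ∈ R) (hR : ∀ ℓ ∈ R, ℓ - m ∈ R ∨ ℓ + n ∈ R) :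
    ∀ ℓ ∈ R, Xor (ℓ - m ∈ R) (ℓ + n ∈ R) := by
  intro ℓ hℓ
  refine (xor_iff_or_and_not_and _ _).2 ⟨hR ℓ hℓ, fun ⟨hsub, hadd⟩ => ?_⟩
  have := (bijOn_intCast_of_pred_mem hcop hcard h0 hR).injOn hsub hadd
    (intCast_sub_eq_intCast_add m n ℓ)
  have := hcop.neZero_add.ne
  omega

theorem isRankSet_image_range {m n : ℕ} {g : ℕ → ℤ} (h0 : g 0 = 0) (hN : g (m + n) = 0)
    (hstep : ∀ i, g (i + 1) = g i + m ∨ g (i + 1) = g i - n) :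
    IsRankSet m n ((Finset.range (m + n)).image g) := by
  set b : ℕ → Bool := fun i => decide (g (i + 1) = g i + m)
  have hg : ∀ i, g (i + 1) = g i + rankStep m n (b i) := by
    intro i
    by_cases h : g (i + 1) = g i + m
    · simp [b, rankStep, h]
    · simp [b, rankStep, (hstep i).resolve_left h, sub_eq_add_neg]
  refine ⟨(List.range (m + n)).map b, isPathWord_iff.2 ⟨by simp, ?_⟩, ?_⟩
  · simpa [h0, hN] using sum_map_rankStep_range hg (m + n)
  · rw [rankSet, ← h0, rankWalk_map_range hg]
    ext; simp

theorem isRankSet_of_pred_mem {m n : ℕ} (hcop : m.Coprime n) {R : Finset ℤ}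
    (hcard : R.card = m + n) (h0 : (0 : ℤ) ∈ R) (hR : ∀ ℓ ∈ R, ℓ - m ∈ R ∨ ℓ + n ∈ R) :
    IsRankSet m n R := by
  have := hcop.neZero_add
  have hbij := bijOn_intCast_of_pred_mem hcop hcard h0 hR
  choose e heR he using fun x : ZMod (m + n) => hbij.surjOn (Set.mem_univ x)
  have he_eq : ∀ ℓ ∈ R, e ℓ = ℓ := fun ℓ hℓ => hbij.injOn (heR _) hℓ (he _)
  -- the `i`-th rank of the path is the element of `R` congruent to `i * m`
  set g : ℕ → ℤ := fun i => e (i * m)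
  have hg0 : g 0 = 0 := by simpa [g] using he_eq 0 h0
  have hgN : g (m + n) = 0 := by simpa [g] using hg0
  have hstep : ∀ i, g (i + 1) = g i + m ∨ g (i + 1) = g i - n := by
    intro i
    have hpred : ((g (i + 1) - m : ℤ) : ZMod (m + n)) = (g i : ZMod (m + n)) := by
      push_cast [g, he]; ring
    rcases hR _ (heR ((i + 1 : ℕ) * m)) with h | h
    · have := hbij.injOn h (heR _) hpred
      left; linarith
    · have := hbij.injOn h (heR _) ((intCast_sub_eq_intCast_add m n _).symm.trans hpred)
      right; linarith
  have himage : (Finset.range (m + n)).image g = R := by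
    refine Finset.Subset.antisymm (fun ℓ hℓ => ?_) (fun ℓ hℓ => ?_)
    · obtain ⟨i, -, rfl⟩ := Finset.mem_image.1 hℓ
      exact heR _
    · have hm : IsUnit (m : ZMod (m + n)) :=
        (ZMod.isUnit_iff_coprime m _).2 (Nat.coprime_self_add_right.2 hcop)
      obtain ⟨k, hk, hkℓ⟩ := exists_lt_natCast_mul_eq_of_isUnit hm (ℓ : ZMod (m + n))
      exact Finset.mem_image.2 ⟨k, Finset.mem_range.2 hk, by simp [g, hkℓ, he_eq ℓ hℓ]⟩
  exact himage ▸ isRankSet_image_range hg0 hgN hstep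

theorem IsRankSet.pred_mem {m n : ℕ} {R : Finset ℤ} (h : IsRankSet m n R) :
    ∀ ℓ ∈ R, ℓ - m ∈ R ∨ ℓ + n ∈ R := by
  obtain ⟨P, hP, rfl⟩ := h
  intro ℓ hℓ
  simp only [rankSet, List.mem_toFinset] at hℓ ⊢
  rcases mem_rankWalk_pred hℓ with rfl | h | h
  · have hne : P ≠ [] := by rintro rfl; simp [rankWalk] at hℓ
    simpa [(isPathWord_iff.1 hP).2] using rankWalk_end_pred (m := m) (n := n) hne 0
  · exact .inl h
  · exact .inr h

theorem rank_set_iff_closed_down_general (m n : ℕ)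
    (hcop : Nat.Coprime m n) (R : Finset ℤ) (hcard : R.card = m + n)
    (h0 : (0 : ℤ) ∈ R) :
    (IsRankSet m n R ↔ ∀ ℓ ∈ R, Xor' (ℓ - (m : ℤ) ∈ R) (ℓ + (n : ℤ) ∈ R)) ∧
    ((∀ ℓ ∈ R, Xor' (ℓ - (m : ℤ) ∈ R) (ℓ + (n : ℤ) ∈ R)) ↔
      ∀ ℓ ∈ R, ℓ - (m : ℤ) ∈ R ∨ ℓ + (n : ℤ) ∈ R) := by
  have hxor := xor_of_pred_mem hcop hcard h0
  have hor : (∀ ℓ ∈ R, Xor (ℓ - (m : ℤ) ∈ R) (ℓ + (n : ℤ) ∈ R)) →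
      ∀ ℓ ∈ R, ℓ - (m : ℤ) ∈ R ∨ ℓ + (n : ℤ) ∈ R :=
    fun h ℓ hℓ => Xor.or (h ℓ hℓ)
  exact ⟨⟨fun h => hxor h.pred_mem, fun h => isRankSet_of_pred_mem hcop hcard h0 (hor h)⟩,
    ⟨hor, hxor⟩⟩

/-- For a coprime pair `(m,n)` of positive integers and a set `R` of
`m + n` integers with `0 ∈ R`, `R` is the rank set of some `(m,n)`-path if and only if
for every `ℓ ∈ R` exactly one of `ℓ - m` and `ℓ + n` belongs to `R`; and this in turn
is equivalent to: for every `ℓ ∈ R`, at least one of `ℓ - m` and `ℓ + n` belongs to `R`. -/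
theorem rank_set_iff_closed_down (m n : ℕ) (hm : 0 < m) (hn : 0 < n)
    (hcop : Nat.Coprime m n) (R : Finset ℤ) (hcard : R.card = m + n)
    (h0 : (0 : ℤ) ∈ R) :
    (IsRankSet m n R ↔ ∀ ℓ ∈ R, Xor' (ℓ - (m : ℤ) ∈ R) (ℓ + (n : ℤ) ∈ R)) ∧
    ((∀ ℓ ∈ R, Xor' (ℓ - (m : ℤ) ∈ R) (ℓ + (n : ℤ) ∈ R)) ↔
      ∀ ℓ ∈ R, ℓ - (m : ℤ) ∈ R ∨ ℓ + (n : ℤ) ∈ R) :=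
  rank_set_iff_closed_down_general m n hcop R hcard h0
end

section
/- Let (m,n) be a coprime pair of positive integers. A word σ of n S's and m W's is the SW-sequence of some (m,n)-Dyck path if and only if there exists a set R of m+n nonnegative integers with 0 ∈ R that is compatible with σ. Moreover, if R is compatible with σ, then R is the rank set of an (m,n)-Dyck path D with σ(D)=σ. -/
/-- The SW-sequence of a (Dyck path) rank set `R`, reading the sorted ranks from left
to right: `true` (= the letter `S`) at rank `r` iff `r + m ∈ R`, i.e. `r ∈ S(R) = R ∩ (R - m)`;
otherwise `false` (= the letter `W`). -/
def swSeq (m : ℕ) (R : Finset ℤ) : List Bool :=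
  (R.sort (· ≤ ·)).map (fun r => decide (r + (m : ℤ) ∈ R))

/-- A set `R` of `m + n` nonnegative integers containing `0`, with sorted sequence
`𝔯_1 < ⋯ < 𝔯_{m+n}`, is compatible with the word `σ` (where `true` = `S`, `false` = `W`)
if `𝔯_{σ⁻¹(S_i)} + m ∈ R` for all `i` and `𝔯_{σ⁻¹(W_j)} - n ∈ R` for all `j`. -/
def Compatible (m n : ℕ) (σ : List Bool) (R : Finset ℤ) : Prop :=
  R.card = m + n ∧ (0 : ℤ) ∈ R ∧ (∀ r ∈ R, 0 ≤ r) ∧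
    ∀ p ∈ σ.zip (R.sort (· ≤ ·)),
      (p.1 = true → p.2 + (m : ℤ) ∈ R) ∧ (p.1 = false → p.2 - (n : ℤ) ∈ R)

/-! Every step of a path changes the rank by `m ≡ -n (mod m + n)`, so the ranks of a path
starting at `r` are `r, r + m, r + 2m, …` modulo `m + n`; as `m` is a unit mod `m + n`, the
rank set of an `(m,n)`-path is a complete residue system mod `m + n`. In particular `r + m` and
`r - n`, being congruent and distinct, never both lie in a rank set: `S(R)` and `W(R)` are
disjoint, so compatibility with `σ` already forces `σ` to be the SW-sequence of `R`.

Conversely, compatibility makes `r ↦ (r + m if r + m ∈ R, else r - n)` a self-map of `R`.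
Its orbit from `0` again visits distinct residues, so in `m + n` steps it sweeps out all of `R`
and comes back to `0`; recording its steps gives a Dyck path with rank set `R`. -/

theorem List.map_eq_iff_forall_mem_zip {α β : Type*} {g : α → β} :
    ∀ {L : List α} {σ : List β},
      L.map g = σ ↔ L.length = σ.length ∧ ∀ p ∈ σ.zip L, p.1 = g p.2
  | [], [] | [], _ :: _ | _ :: _, [] => by simp
  | a :: L, b :: σ => by
    simp only [List.map_cons, List.cons.injEq, List.length_cons, List.zip_cons_cons,
      List.mem_cons, forall_eq_or_imp, List.map_eq_iff_forall_mem_zip (L := L), eq_comm (a := b),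
      Nat.add_right_cancel_iff]
    tauto

theorem Nat.Coprime.add_pos {m n : ℕ} (hcop : m.Coprime n) : 0 < m + n := by
  rcases Nat.eq_zero_or_pos (m + n) with h | h
  · simp_all [Nat.add_eq_zero_iff]
  · exact h

theorem ZMod.natCast_add_natCast_self (m n : ℕ) : (m : ZMod (m + n)) + n = 0 := by
  exact_mod_cast ZMod.natCast_self (m + n)

section RankWalk

variable {m n : ℤ}

theorem rankWalk_length : ∀ (P : List Bool) (r : ℤ), (rankWalk m n P r).length = P.length
  | [], _ => rfl
  | _ :: P, _ => by simp [rankWalk, rankWalk_length P]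

theorem add_mem_or_sub_mem_rankWalk_append :
    ∀ (P : List Bool) (r : ℤ), ∀ x ∈ rankWalk m n P r,
      x + m ∈ rankWalk m n P r ++ [r + P.count true * m - P.count false * n] ∨
        x - n ∈ rankWalk m n P r ++ [r + P.count true * m - P.count false * n]
  | [], _ => by simp [rankWalk]
  | b :: P, r => by
    intro x hx
    set r' := r + if b then m else -n
    have hend : r + (b :: P).count true * m - (b :: P).count false * n =
        r' + P.count true * m - P.count false * n := by
      cases b <;> simp [r'] <;> ring
    have hhead : r' ∈ rankWalk m n P r' ++ [r' + P.count true * m - P.count false * n] := by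
      cases P <;> simp [rankWalk]
    rw [hend, rankWalk, List.cons_append]
    rcases List.mem_cons.1 hx with rfl | hx
    · cases b
      · exact Or.inr (List.mem_cons_of_mem _ (by simpa [r', sub_eq_add_neg] using hhead))
      · exact Or.inl (List.mem_cons_of_mem _ (by simpa [r'] using hhead))
    · exact (add_mem_or_sub_mem_rankWalk_append P r' x hx).imp
        (List.mem_cons_of_mem _) (List.mem_cons_of_mem _)

variable {b : ℤ → Bool} {f : ℤ → ℤ}

theorem rankWalk_map_iterate (hf : ∀ x, f x = x + if b x then m else -n) :
    ∀ (p : ℕ) (x : ℤ), rankWalk m n ((List.range p).map fun k => b (f^[k] x)) x =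
      (List.range p).map fun k => f^[k] x
  | 0, _ => rfl
  | p + 1, x => by
    simp only [List.range_succ_eq_map, List.map_cons, List.map_map, rankWalk, ← hf,
      Function.iterate_zero_apply]
    exact congrArg _ (rankWalk_map_iterate hf p (f x))

theorem iterate_eq_add_count (hf : ∀ x, f x = x + if b x then m else -n) (p : ℕ) (x : ℤ) :
    f^[p] x = x + ((List.range p).map fun k => b (f^[k] x)).count true * m -
      ((List.range p).map fun k => b (f^[k] x)).count false * n := by
  induction p with
  | zero => simp
  | succ p ih =>
    rw [Function.iterate_succ_apply', hf, List.range_succ, List.map_append, List.count_append,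
      List.count_append]
    cases h : b (f^[p] x) <;> simp [h] <;> rw [ih] <;> ring

end RankWalk

section Residues

variable {m n : ℕ}

theorem map_intCast_rankWalk : ∀ (P : List Bool) (r : ℤ),
    (rankWalk m n P r).map (Int.cast : ℤ → ZMod (m + n)) =
      (List.range P.length).map fun k : ℕ => (r : ZMod (m + n)) + k * m
  | [], _ => rfl
  | b :: P, r => by
    have hstep : ((if b then (m : ℤ) else -n : ℤ) : ZMod (m + n)) = m := by
      cases b
      · simp only [Bool.false_eq_true, if_false, Int.cast_neg, Int.cast_natCast]
        linear_combination (-1 : ZMod (m + n)) * ZMod.natCast_add_natCast_self m n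
      · simp
    simp only [rankWalk, List.map_cons, map_intCast_rankWalk P, List.length_cons,
      List.range_succ_eq_map, List.map_map, Int.cast_add, hstep]
    congr 1
    · simp
    · refine List.map_congr_left fun k _ => ?_
      simp only [Function.comp_apply, Nat.succ_eq_add_one, Nat.cast_succ]
      ring

theorem nodup_map_intCast_rankWalk (hcop : m.Coprime n) {P : List Bool}
    (hP : P.length = m + n) (r : ℤ) :
    ((rankWalk m n P r).map (Int.cast : ℤ → ZMod (m + n))).Nodup := by
  rw [map_intCast_rankWalk, hP]
  refine List.Nodup.map_on (fun k hk l hl hkl => ?_) List.nodup_range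
  let u := ZMod.unitOfCoprime m (Nat.coprime_self_add_right.mpr hcop)
  have hmul : (k : ZMod (m + n)) * u = l * u := add_left_cancel hkl
  have hmod := (ZMod.natCast_eq_natCast_iff' k l (m + n)).1 ((Units.mul_left_inj u).1 hmul)
  rwa [Nat.mod_eq_of_lt (List.mem_range.1 hk), Nat.mod_eq_of_lt (List.mem_range.1 hl)] at hmod

theorem card_rankSet (hcop : m.Coprime n) {P : List Bool} (hP : P.length = m + n) :
    (rankSet m n P).card = m + n := by
  rw [rankSet, List.toFinset_card_of_nodup
    ((nodup_map_intCast_rankWalk hcop hP 0).of_map _), rankWalk_length, hP]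

theorem injOn_intCast_rankSet (hcop : m.Coprime n) {P : List Bool} (hP : P.length = m + n) :
    Set.InjOn (Int.cast : ℤ → ZMod (m + n)) (rankSet m n P) := fun _ hx _ hy =>
  List.inj_on_of_nodup_map (nodup_map_intCast_rankWalk hcop hP 0)
    (List.mem_toFinset.1 hx) (List.mem_toFinset.1 hy)

theorem intCast_count_mul_sub_count_mul {P : List Bool} (hP : P.length = m + n) :
    ((P.count true * m - P.count false * n : ℤ) : ZMod (m + n)) = 0 := by
  have hsum : ((P.count true + P.count false : ℕ) : ZMod (m + n)) = (m + n : ℕ) := by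
    rw [List.count_true_add_count_false, hP]
  push_cast at hsum ⊢
  linear_combination (m : ZMod (m + n)) * hsum +
    ((m : ZMod (m + n)) - P.count false) * ZMod.natCast_add_natCast_self m n

theorem sub_notMem_of_add_mem {R : Finset ℤ} (hR : Set.InjOn (Int.cast : ℤ → ZMod (m + n)) R)
    (hmn : 0 < m + n) {r : ℤ} (hr : r + m ∈ R) : r - n ∉ R := fun hr' => by
  have := hR hr hr' (by push_cast; linear_combination ZMod.natCast_add_natCast_self m n)
  omega

end Residues

section DyckPaths

variable {m n : ℕ}

theorem zero_mem_rankSet {P : List Bool} (hP : P ≠ []) : 0 ∈ rankSet m n P := by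
  cases P
  · exact absurd rfl hP
  · simp [rankSet, rankWalk]

theorem isPathWord_of_count_mul_eq (hmn : 0 < m + n) {P : List Bool} (hP : P.length = m + n)
    (hclosed : (P.count true * m : ℤ) = P.count false * n) : IsPathWord m n P := by
  have hsum : (P.count true : ℤ) + P.count false = m + n := by
    exact_mod_cast (P.count_true_add_count_false).trans hP
  have : (P.count true : ℤ) * (m + n) = n * (m + n) := by
    linear_combination hclosed + (n : ℤ) * hsum
  exact ⟨hP, Nat.eq_of_mul_eq_mul_right hmn (by exact_mod_cast this)⟩

theorem add_mem_or_sub_mem_rankSet {P : List Bool} (hP : IsPathWord m n P) :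
    ∀ r ∈ rankSet m n P, r + m ∈ rankSet m n P ∨ r - n ∈ rankSet m n P := by
  intro r hr
  have hr' := List.mem_toFinset.1 hr
  have hne : P ≠ [] := by rintro rfl; simp [rankWalk] at hr'
  have hfalse : P.count false = m := by
    have := P.count_true_add_count_false; have := hP.1; have := hP.2; omega
  have hclosed : ∀ x ∈ rankWalk m n P 0 ++ [0], x ∈ rankSet m n P := by
    intro x hx
    rcases List.mem_append.1 hx with hx | hx
    · exact List.mem_toFinset.2 hx
    · exact List.mem_singleton.1 hx ▸ zero_mem_rankSet hne
  have := add_mem_or_sub_mem_rankWalk_append P 0 r hr'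
  rw [hP.2, hfalse, zero_add, mul_comm, sub_self] at this
  exact this.imp (hclosed _) (hclosed _)

theorem compatible_swSeq_rankSet (hcop : m.Coprime n) {P : List Bool} (hP : IsDyckWord m n P) :
    Compatible m n (swSeq m (rankSet m n P)) (rankSet m n P) := by
  have hne : P ≠ [] := List.ne_nil_of_length_pos (hP.1.1 ▸ hcop.add_pos)
  refine ⟨card_rankSet hcop hP.1.1, zero_mem_rankSet hne,
    fun r hr => hP.2 r (List.mem_toFinset.1 hr), fun p hp => ?_⟩
  have hp1 : p.1 = decide (p.2 + m ∈ rankSet m n P) :=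
    (List.map_eq_iff_forall_mem_zip.1 rfl).2 p hp
  have hp2 : p.2 ∈ rankSet m n P := (Finset.mem_sort _).1 (List.of_mem_zip hp).2
  refine ⟨fun h => of_decide_eq_true (hp1 ▸ h), fun h => ?_⟩
  exact (add_mem_or_sub_mem_rankSet hP.1 _ hp2).resolve_left (of_decide_eq_false (hp1 ▸ h))

theorem Compatible.add_mem_or_sub_mem {σ : List Bool} {R : Finset ℤ} (hc : Compatible m n σ R)
    (hlen : σ.length = m + n) : ∀ r ∈ R, r + m ∈ R ∨ r - n ∈ R := by
  intro r hr
  have hsnd : (σ.zip (R.sort (· ≤ ·))).map Prod.snd = R.sort (· ≤ ·) :=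
    List.map_snd_zip (by simp [hc.1, hlen])
  rw [← Finset.mem_sort (· ≤ ·), ← hsnd, List.mem_map] at hr
  obtain ⟨⟨b, r⟩, hp, rfl⟩ := hr
  cases b
  · exact Or.inr ((hc.2.2.2 _ hp).2 rfl)
  · exact Or.inl ((hc.2.2.2 _ hp).1 rfl)

theorem swSeq_eq_of_compatible {σ : List Bool} {R : Finset ℤ}
    (hR : Set.InjOn (Int.cast : ℤ → ZMod (m + n)) R) (hmn : 0 < m + n)
    (hlen : σ.length = m + n) (hc : Compatible m n σ R) : swSeq m R = σ := by
  refine List.map_eq_iff_forall_mem_zip.2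
    ⟨by rw [Finset.length_sort, hc.1, hlen], fun p hp => ?_⟩
  obtain ⟨hS, hW⟩ := hc.2.2.2 p hp
  cases hp1 : p.1
  · exact (decide_eq_false fun h => sub_notMem_of_add_mem hR hmn h (hW hp1)).symm
  · exact (decide_eq_true (hS hp1)).symm

theorem exists_isDyckWord_rankSet_eq (hcop : m.Coprime n) {R : Finset ℤ}
    (hcard : R.card = m + n) (h0 : 0 ∈ R) (hnonneg : ∀ r ∈ R, 0 ≤ r)
    (hclosed : ∀ r ∈ R, r + m ∈ R ∨ r - n ∈ R) :
    ∃ P : List Bool, IsDyckWord m n P ∧ rankSet m n P = R := by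
  set b : ℤ → Bool := fun r => decide (r + m ∈ R)
  set f : ℤ → ℤ := fun r => r + if b r then (m : ℤ) else -n
  have hf : ∀ x, f x = x + if b x then (m : ℤ) else -n := fun _ => rfl
  have hfR : Set.MapsTo f R R := by
    intro r hr
    by_cases h : r + m ∈ R
    · simp [f, b, h]
    · simpa [f, b, h, ← sub_eq_add_neg] using (hclosed r hr).resolve_left h
  have horbit : ∀ k, f^[k] 0 ∈ R := fun k => hfR.iterate k h0
  set P := (List.range (m + n)).map fun k => b (f^[k] 0)
  have hlen : P.length = m + n := by simp [P]
  have hR : rankSet m n P = R := by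
    refine Finset.eq_of_subset_of_card_le (fun r hr => ?_) (by rw [hcard, card_rankSet hcop hlen])
    rw [rankSet, rankWalk_map_iterate hf, List.mem_toFinset, List.mem_map] at hr
    obtain ⟨k, -, rfl⟩ := hr
    exact horbit k
  have hend : f^[m + n] 0 = 0 + P.count true * m - P.count false * n :=
    iterate_eq_add_count hf (m + n) 0
  have hback : f^[m + n] 0 = 0 :=
    injOn_intCast_rankSet hcop hlen (hR ▸ horbit _) (hR ▸ h0) <| by
      rw [hend, zero_add, intCast_count_mul_sub_count_mul hlen, Int.cast_zero]
  have hpath := isPathWord_of_count_mul_eq hcop.add_pos hlen (by linarith)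
  exact ⟨P, ⟨hpath, fun r hr => hnonneg r (hR ▸ List.mem_toFinset.2 hr)⟩, hR⟩

end DyckPaths

theorem swSeq_iff_exists_compatible_general (m n : ℕ)
    (hcop : Nat.Coprime m n) (σ : List Bool) (hlen : σ.length = m + n) :
    ((∃ P : List Bool, IsDyckWord m n P ∧ swSeq m (rankSet m n P) = σ) ↔
      ∃ R : Finset ℤ, Compatible m n σ R) ∧
    (∀ R : Finset ℤ, Compatible m n σ R →
      ∃ P : List Bool, IsDyckWord m n P ∧ rankSet m n P = R ∧ swSeq m R = σ) := by
  have exists_dyck (R : Finset ℤ) (hR : Compatible m n σ R) :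
      ∃ P : List Bool, IsDyckWord m n P ∧ rankSet m n P = R ∧ swSeq m R = σ := by
    obtain ⟨P, hP, rfl⟩ := exists_isDyckWord_rankSet_eq hcop hR.1 hR.2.1 hR.2.2.1
      (hR.add_mem_or_sub_mem hlen)
    exact ⟨P, hP, rfl, swSeq_eq_of_compatible (injOn_intCast_rankSet hcop hP.1.1) hcop.add_pos
      hlen hR⟩
  refine ⟨⟨?_, ?_⟩, exists_dyck⟩
  · rintro ⟨P, hP, rfl⟩
    exact ⟨_, compatible_swSeq_rankSet hcop hP⟩
  · rintro ⟨R, hR⟩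
    obtain ⟨P, hP, rfl, hsw⟩ := exists_dyck R hR
    exact ⟨P, hP, hsw⟩

/-- A word `σ` of `n` `S`'s and `m` `W`'s is the SW-sequence of some
`(m,n)`-Dyck path if and only if there exists a set `R` of `m+n` nonnegative integers
with `0 ∈ R` compatible with `σ`.  Moreover, any `R` compatible with `σ` is the rank
set of an `(m,n)`-Dyck path whose SW-sequence is `σ`. -/
theorem swSeq_iff_exists_compatible (m n : ℕ) (hm : 0 < m) (hn : 0 < n)
    (hcop : Nat.Coprime m n) (σ : List Bool) (hlen : σ.length = m + n)
    (hcount : σ.count true = n) :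
    ((∃ P : List Bool, IsDyckWord m n P ∧ swSeq m (rankSet m n P) = σ) ↔
      ∃ R : Finset ℤ, Compatible m n σ R) ∧
    (∀ R : Finset ℤ, Compatible m n σ R →
      ∃ P : List Bool, IsDyckWord m n P ∧ rankSet m n P = R ∧ swSeq m R = σ) :=
  swSeq_iff_exists_compatible_general m n hcop σ hlen
end
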